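/- Ben-David style domain adaptation bound: for any hypothesis θ in a hypothesis class F closed under the labeling functions involved, the target error satisfies ε_T(θ) ≤ ε_S(θ) + (1/2)·d_{H∆H}(P_S, P_T) + C*, where C* = min_{θ'∈F} (ε_S(θ') + ε_T(θ')). -/
import Mathlib


open MeasureTheory

/-- The H∆H divergence between two measures, w.r.t. a hypothesis class `F`. -/
noncomputable def dHdH {H L : Type*} [MeasurableSpace H]
    (F : Set (H → L)) (P Q : Measure H) : ℝ :=
  2 * ⨆ p : F × F,
    |(Q {h | (p.1 : H → L) h ≠ (p.2 : H → L) h}).toReal -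
     (P {h | (p.1 : H → L) h ≠ (p.2 : H → L) h}).toReal|

/-- Error of hypothesis `θ` w.r.t. true labeling `g` under distribution `P`. -/
noncomputable def err {X L : Type*} [MeasurableSpace X]
    (P : Measure X) (g θ : X → L) : ℝ :=
  (P {x | θ x ≠ g x}).toReal

theorem ben_david_bound {X L : Type*} [MeasurableSpace X]
    (F : Set (X → L)) (PS PT : Measure X)
    [IsProbabilityMeasure PS] [IsProbabilityMeasure PT]
    (g : X → L) (hg : g ∈ F) (θ : X → L) (hθ : θ ∈ F)
    (Cstar : ℝ)
    (hC : IsLeast {c : ℝ | ∃ θ' ∈ F, c = err PS g θ' + err PT g θ'} Cstar) :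
    err PT g θ ≤ err PS g θ + (1 / 2) * dHdH F PS PT + Cstar := by
  have hCnonneg : 0 ≤ Cstar := by
    obtain ⟨θ', hθ', hceq⟩ := hC.1
    have h1 : 0 ≤ err PS g θ' := ENNReal.toReal_nonneg
    have h2 : 0 ≤ err PT g θ' := ENNReal.toReal_nonneg
    linarith
  have hbdd : BddAbove (Set.range fun p : F × F =>
      |(PT {h | (p.1 : X → L) h ≠ (p.2 : X → L) h}).toReal -
       (PS {h | (p.1 : X → L) h ≠ (p.2 : X → L) h}).toReal|) := by
    refine ⟨1, ?_⟩
    rintro x ⟨p, rfl⟩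
    have hT : (PT {h | (p.1 : X → L) h ≠ (p.2 : X → L) h}).toReal ≤ 1 := by
      refine ENNReal.toReal_le_of_le_ofReal one_pos.le ?_
      simpa using prob_le_one
    have hS : (PS {h | (p.1 : X → L) h ≠ (p.2 : X → L) h}).toReal ≤ 1 := by
      refine ENNReal.toReal_le_of_le_ofReal one_pos.le ?_
      simpa using prob_le_one
    have h0T : 0 ≤ (PT {h | (p.1 : X → L) h ≠ (p.2 : X → L) h}).toReal :=
      ENNReal.toReal_nonneg
    have h0S : 0 ≤ (PS {h | (p.1 : X → L) h ≠ (p.2 : X → L) h}).toReal :=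
      ENNReal.toReal_nonneg
    rw [abs_sub_le_iff]
    constructor <;> linarith
  have key : err PT g θ - err PS g θ ≤
      ⨆ p : F × F,
        |(PT {h | (p.1 : X → L) h ≠ (p.2 : X → L) h}).toReal -
         (PS {h | (p.1 : X → L) h ≠ (p.2 : X → L) h}).toReal| := by
    have h := le_ciSup hbdd ((⟨θ, hθ⟩, ⟨g, hg⟩) : F × F)
    refine le_trans ?_ h
    simp only [err]
    exact le_abs_self _
  have hd : (1 / 2) * dHdH F PS PT =
      ⨆ p : F × F,
        |(PT {h | (p.1 : X → L) h ≠ (p.2 : X → L) h}).toReal -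
         (PS {h | (p.1 : X → L) h ≠ (p.2 : X → L) h}).toReal| := by
    unfold dHdH; ring
  linarith [key, hd.ge]
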